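/- Multiplicity of asymmetric-information equilibrium strategies: suppose T₁ ≠ T₂ both lie in (0, min (θ̲₁ · T_max) (θ̲₂ · T_max)] and both satisfy the minimal-type constrained-equilibrium condition (σ₁^{Tₖ}(θ̲₁) ≤ m_A(σ₂^{Tₖ}(θ̲₂)) and σ₂^{Tₖ}(θ̲₂) ≥ s_A(σ₁^{Tₖ}(θ̲₁)) for k = 1, 2). Then both the T₁-targeting and the T₂-targeting strategy profiles are ex-post equilibria, and they are distinct: for every θ₁ ∈ [θ̲₁, θ̄₁], σ₁^{T₁}(θ₁) ≠ σ₁^{T₂}(θ₁), and for every θ₂ ∈ [θ̲₂, θ̄₂], σ₂^{T₁}(θ₂) ≠ σ₂^{T₂}(θ₂). -/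

import Mathlib

open Set

/-- Type-dependent interdealer trade quantity. -/
noncomputable def interQt (D S : ℝ → ℝ) (θ1 θ2 x y : ℝ) : ℝ :=
  min (θ1 * D x) (θ2 * S y)

/-- Type-dependent payoff of `BD_mm`. -/
noncomputable def piMMt (D S : ℝ → ℝ) (θ1 θ2 x y : ℝ) : ℝ :=
  (1 / 2) * max (y - x) 0 * interQt D S θ1 θ2 x y -
    max (θ1 * D x - interQt D S θ1 θ2 x y) 0 * x

/-- Type-dependent payoff of `BD_rm`. -/
noncomputable def piRMt (D S : ℝ → ℝ) (θ1 θ2 x y : ℝ) : ℝ :=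
  (1 / 2) * max (y - x) 0 * interQt D S θ1 θ2 x y -
    max (θ2 * S y - interQt D S θ1 θ2 x y) 0 * y

/-- Ex-post equilibrium of the `T`-targeting profile `(σ1, σ2)`. -/
def IsExPostEquilibrium (D S : ℝ → ℝ) (rb θl1 θu1 θl2 θu2 : ℝ)
    (σ1 σ2 : ℝ → ℝ) : Prop :=
  ∀ θ1 ∈ Set.Icc θl1 θu1, ∀ θ2 ∈ Set.Icc θl2 θu2,
    (∀ x ∈ Set.Icc (0:ℝ) (σ2 θ2),
      piMMt D S θ1 θ2 x (σ2 θ2) ≤ piMMt D S θ1 θ2 (σ1 θ1) (σ2 θ2)) ∧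
    (∀ y ∈ Set.Icc (σ1 θ1) rb,
      piRMt D S θ1 θ2 (σ1 θ1) y ≤ piRMt D S θ1 θ2 (σ1 θ1) (σ2 θ2))

/-!
Under a `T`-targeting profile both dealers' offers clear at `T`. If the market maker deviates to
a rate `x` above `σ₁(θ₁)` it only adds an unmatched quantity that it pays for; below `σ₁(θ₁)` it
earns `½ (y - x) θ₁ D x`. Now `r ↦ (y - r) D r` is concave, being a product of nonnegative concave
functions that vary in opposite directions, so it increases up to its maximiser `m_A y`. Targeting
rates decrease in the type, so the minimal-type condition puts every `σ₁(θ₁) ≤ σ₁(θ̲₁)` below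
`m_A(σ₂(θ̲₂))`, and raising `y` from `σ₂(θ̲₂)` to `σ₂(θ₂)` only adds `(y - σ₂(θ̲₂)) D x`, which is
increasing in `x`. The same argument with `r ↦ (r - x) S r` handles the other dealer. Different
targets give different rates because `θ D (σ θ)` recovers the target.
-/

theorem concaveOn_of_contDiffOn_two {f : ℝ → ℝ} {U s : Set ℝ} (hU : IsOpen U) (hs : Convex ℝ s)
    (hsU : s ⊆ U) (hf : ContDiffOn ℝ 2 f U) (hf'' : ∀ x ∈ interior s, deriv (deriv f) x ≤ 0) :
    ConcaveOn ℝ s f :=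
  have hint : interior s ⊆ U := interior_subset.trans hsU
  concaveOn_of_deriv2_nonpos hs (hf.continuousOn.mono hsU)
    ((hf.differentiableOn (by norm_num)).mono hint)
    (((hf.deriv_of_isOpen hU (m := 1) (by norm_num)).differentiableOn (by norm_num)).mono hint)
    hf''

theorem ConcaveOn.le_of_mem_segment {s : Set ℝ} {g : ℝ → ℝ} (hg : ConcaveOn ℝ s g) {a b m : ℝ}
    (ha : a ∈ s) (hm : m ∈ s) (hb : b ∈ segment ℝ a m) (hmax : g a ≤ g m) : g a ≤ g b := by
  simpa [min_eq_left hmax] using hg.ge_on_segment ha hm hb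

theorem concaveOn_sub_mul {f : ℝ → ℝ} {s : Set ℝ} {a : ℝ} (hc : ConcaveOn ℝ s f)
    (hmono : MonotoneOn f s) (h0 : ∀ r ∈ s, 0 ≤ f r) (hs : ∀ r ∈ s, r ≤ a) :
    ConcaveOn ℝ s (fun r => (a - r) * f r) :=
  ((concaveOn_const a hc.1).sub (convexOn_id hc.1)).mul hc (fun r hr => sub_nonneg.2 (hs r hr))
    (fun r hr => h0 r hr) (AntitoneOn.antivaryOn (fun _ _ _ _ h => sub_le_sub_left h a) hmono)

theorem concaveOn_mul_sub {f : ℝ → ℝ} {s : Set ℝ} {a : ℝ} (hc : ConcaveOn ℝ s f)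
    (hanti : AntitoneOn f s) (h0 : ∀ r ∈ s, 0 ≤ f r) (hs : ∀ r ∈ s, a ≤ r) :
    ConcaveOn ℝ s (fun r => (r - a) * f r) :=
  ((concaveOn_id hc.1).sub (convexOn_const a hc.1)).mul hc (fun r hr => sub_nonneg.2 (hs r hr))
    (fun r hr => h0 r hr) (MonotoneOn.antivaryOn (fun _ _ _ _ h => sub_le_sub_right h a) hanti)

theorem StrictMonoOn.le_of_mul_eq_mul {f : ℝ → ℝ} {s : Set ℝ} (hf : StrictMonoOn f s) {a b θ θ' : ℝ}
    (ha : a ∈ s) (hb : b ∈ s) (hθ' : 0 < θ') (hθ : θ' ≤ θ) (hfa : 0 ≤ f a)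
    (h : θ * f a = θ' * f b) : a ≤ b := by
  by_contra! hba
  nlinarith [mul_le_mul_of_nonneg_right hθ hfa, mul_lt_mul_of_pos_left (hf hb ha hba) hθ']

theorem StrictAntiOn.le_of_mul_eq_mul {f : ℝ → ℝ} {s : Set ℝ} (hf : StrictAntiOn f s) {a b θ θ' : ℝ}
    (ha : a ∈ s) (hb : b ∈ s) (hθ' : 0 < θ') (hθ : θ' ≤ θ) (hfa : 0 ≤ f a)
    (h : θ * f a = θ' * f b) : b ≤ a := by
  by_contra! hab
  nlinarith [mul_le_mul_of_nonneg_right hθ hfa, mul_lt_mul_of_pos_left (hf ha hb hab) hθ']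

section Payoffs

variable {D S : ℝ → ℝ} {θ1 θ2 x0 y0 : ℝ}

theorem piMMt_le_of_le (hθ1 : 0 ≤ θ1) (hQ : θ1 * D x0 = θ2 * S y0) (hx0y0 : x0 ≤ y0) {x : ℝ}
    (hxy0 : x ≤ y0) (hDx : D x ≤ D x0) (hgain : (y0 - x) * D x ≤ (y0 - x0) * D x0) :
    piMMt D S θ1 θ2 x y0 ≤ piMMt D S θ1 θ2 x0 y0 := by
  have hQx : interQt D S θ1 θ2 x y0 = θ1 * D x :=
    min_eq_left (hQ ▸ mul_le_mul_of_nonneg_left hDx hθ1)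
  have hQx0 : interQt D S θ1 θ2 x0 y0 = θ1 * D x0 := min_eq_left hQ.le
  simp only [piMMt, hQx, hQx0, sub_self, max_self, max_eq_left (sub_nonneg.2 hxy0),
    max_eq_left (sub_nonneg.2 hx0y0)]
  nlinarith

theorem piMMt_le_of_ge (hθ1 : 0 ≤ θ1) (hQ : θ1 * D x0 = θ2 * S y0) (hT : 0 ≤ θ1 * D x0)
    (hx0y0 : x0 ≤ y0) {x : ℝ} (hx : 0 ≤ x) (hx0x : x0 ≤ x) (hDx : D x0 ≤ D x) :
    piMMt D S θ1 θ2 x y0 ≤ piMMt D S θ1 θ2 x0 y0 := by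
  have hQx : interQt D S θ1 θ2 x y0 = θ1 * D x0 :=
    hQ ▸ min_eq_right (hQ ▸ mul_le_mul_of_nonneg_left hDx hθ1)
  have hQx0 : interQt D S θ1 θ2 x0 y0 = θ1 * D x0 := min_eq_left hQ.le
  have hexcess : 0 ≤ θ1 * D x - θ1 * D x0 := sub_nonneg.2 (mul_le_mul_of_nonneg_left hDx hθ1)
  simp only [piMMt, hQx, hQx0, sub_self, max_self, max_eq_left hexcess,
    max_eq_left (sub_nonneg.2 hx0y0)]
  have hmargin : max (y0 - x) 0 ≤ y0 - x0 := max_le (by linarith) (by linarith)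
  nlinarith [mul_le_mul_of_nonneg_right hmargin hT, mul_nonneg hexcess hx]

theorem piRMt_le_of_ge (hθ2 : 0 ≤ θ2) (hQ : θ1 * D x0 = θ2 * S y0) (hx0y0 : x0 ≤ y0) {y : ℝ}
    (hx0y : x0 ≤ y) (hSy : S y ≤ S y0) (hgain : (y - x0) * S y ≤ (y0 - x0) * S y0) :
    piRMt D S θ1 θ2 x0 y ≤ piRMt D S θ1 θ2 x0 y0 := by
  have hQy : interQt D S θ1 θ2 x0 y = θ2 * S y :=
    min_eq_right (hQ ▸ mul_le_mul_of_nonneg_left hSy hθ2)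
  have hQy0 : interQt D S θ1 θ2 x0 y0 = θ2 * S y0 := min_eq_right hQ.ge
  simp only [piRMt, hQy, hQy0, sub_self, max_self, max_eq_left (sub_nonneg.2 hx0y),
    max_eq_left (sub_nonneg.2 hx0y0)]
  nlinarith

theorem piRMt_le_of_le (hθ2 : 0 ≤ θ2) (hQ : θ1 * D x0 = θ2 * S y0) (hT : 0 ≤ θ2 * S y0)
    (hx0y0 : x0 ≤ y0) {y : ℝ} (hx0y : x0 ≤ y) (hy : 0 ≤ y) (hyy0 : y ≤ y0) (hSy : S y0 ≤ S y) :
    piRMt D S θ1 θ2 x0 y ≤ piRMt D S θ1 θ2 x0 y0 := by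
  have hQy : interQt D S θ1 θ2 x0 y = θ2 * S y0 :=
    hQ ▸ min_eq_left (hQ ▸ mul_le_mul_of_nonneg_left hSy hθ2)
  have hQy0 : interQt D S θ1 θ2 x0 y0 = θ2 * S y0 := min_eq_right hQ.ge
  have hexcess : 0 ≤ θ2 * S y - θ2 * S y0 := sub_nonneg.2 (mul_le_mul_of_nonneg_left hSy hθ2)
  simp only [piRMt, hQy, hQy0, sub_self, max_self, max_eq_left hexcess,
    max_eq_left (sub_nonneg.2 hx0y), max_eq_left (sub_nonneg.2 hx0y0)]
  nlinarith [mul_le_mul_of_nonneg_right hyy0 hT, mul_nonneg hexcess hy]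

end Payoffs

theorem sub_mul_le_of_le_argmax {f : ℝ → ℝ} {b y y' m x x0 : ℝ} (hc : ConcaveOn ℝ (Icc 0 b) f)
    (hmono : MonotoneOn f (Icc 0 b)) (h0 : ∀ r ∈ Icc 0 b, 0 ≤ f r) (hyb : y ≤ b) (hyy' : y ≤ y')
    (hm : m ∈ Icc 0 y) (hmax : ∀ r ∈ Icc 0 y, (y - r) * f r ≤ (y - m) * f m)
    (hx : 0 ≤ x) (hxx0 : x ≤ x0) (hx0m : x0 ≤ m) :
    (y' - x) * f x ≤ (y' - x0) * f x0 := by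
  have hsub : Icc 0 y ⊆ Icc 0 b := Icc_subset_Icc_right hyb
  have hxI : x ∈ Icc 0 y := ⟨hx, hxx0.trans (hx0m.trans hm.2)⟩
  have hx0I : x0 ∈ Icc 0 y := ⟨hx.trans hxx0, hx0m.trans hm.2⟩
  have hconc : ConcaveOn ℝ (Icc 0 y) (fun r => (y - r) * f r) :=
    concaveOn_sub_mul (hc.subset hsub (convex_Icc 0 y)) (hmono.mono hsub)
      (fun r hr => h0 r (hsub hr)) (fun _ hr => hr.2)
  have hseg : x0 ∈ segment ℝ x m := by
    rw [segment_eq_Icc (hxx0.trans hx0m)]; exact ⟨hxx0, hx0m⟩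
  have hle : (y - x) * f x ≤ (y - x0) * f x0 := hconc.le_of_mem_segment hxI hm hseg (hmax x hxI)
  have hfx : f x ≤ f x0 := hmono (hsub hxI) (hsub hx0I) hxx0
  nlinarith [mul_le_mul_of_nonneg_left hfx (sub_nonneg.2 hyy')]

theorem sub_mul_le_of_argmax_le {f : ℝ → ℝ} {b x x' s y0 y : ℝ} (hc : ConcaveOn ℝ (Icc 0 b) f)
    (hanti : AntitoneOn f (Icc 0 b)) (h0 : ∀ r ∈ Icc 0 b, 0 ≤ f r) (hx : 0 ≤ x) (hx'x : x' ≤ x)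
    (hs : s ∈ Icc x b) (hmax : ∀ r ∈ Icc x b, (r - x) * f r ≤ (s - x) * f s)
    (hsy0 : s ≤ y0) (hy0y : y0 ≤ y) (hyb : y ≤ b) :
    (y - x') * f y ≤ (y0 - x') * f y0 := by
  have hsub : Icc x b ⊆ Icc 0 b := Icc_subset_Icc_left hx
  have hyI : y ∈ Icc x b := ⟨hs.1.trans (hsy0.trans hy0y), hyb⟩
  have hy0I : y0 ∈ Icc x b := ⟨hs.1.trans hsy0, hy0y.trans hyb⟩
  have hconc : ConcaveOn ℝ (Icc x b) (fun r => (r - x) * f r) :=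
    concaveOn_mul_sub (hc.subset hsub (convex_Icc x b)) (hanti.mono hsub)
      (fun r hr => h0 r (hsub hr)) (fun _ hr => hr.1)
  have hseg : y0 ∈ segment ℝ y s := by
    rw [segment_symm, segment_eq_Icc (hsy0.trans hy0y)]; exact ⟨hsy0, hy0y⟩
  have hle : (y - x) * f y ≤ (y0 - x) * f y0 := hconc.le_of_mem_segment hyI hs hseg (hmax y hyI)
  have hfy : f y ≤ f y0 := hanti (hsub hy0I) (hsub hyI) hy0y
  nlinarith [mul_le_mul_of_nonneg_left hfy (sub_nonneg.2 hx'x)]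

theorem piMMt_le_of_le_argmax {D S : ℝ → ℝ} {b θ1 θ2 x0 y0 y m : ℝ}
    (hDc : ConcaveOn ℝ (Icc 0 b) D) (hDm : MonotoneOn D (Icc 0 b))
    (hD0 : ∀ r ∈ Icc 0 b, 0 ≤ D r) (hθ1 : 0 ≤ θ1) (hQ : θ1 * D x0 = θ2 * S y0)
    (hyy0 : y ≤ y0) (hy0b : y0 ≤ b) (hm : m ∈ Icc 0 y)
    (hmax : ∀ r ∈ Icc 0 y, (y - r) * D r ≤ (y - m) * D m) (hx0 : 0 ≤ x0) (hx0m : x0 ≤ m) :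
    ∀ x ∈ Icc 0 y0, piMMt D S θ1 θ2 x y0 ≤ piMMt D S θ1 θ2 x0 y0 := by
  intro x hx
  have hx0y0 : x0 ≤ y0 := hx0m.trans (hm.2.trans hyy0)
  have hxI : x ∈ Icc 0 b := ⟨hx.1, hx.2.trans hy0b⟩
  have hx0I : x0 ∈ Icc 0 b := ⟨hx0, hx0y0.trans hy0b⟩
  rcases le_total x x0 with hxx0 | hx0x
  · exact piMMt_le_of_le hθ1 hQ hx0y0 hx.2 (hDm hxI hx0I hxx0)
      (sub_mul_le_of_le_argmax hDc hDm hD0 (hyy0.trans hy0b) hyy0 hm hmax hx.1 hxx0 hx0m)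
  · exact piMMt_le_of_ge hθ1 hQ (mul_nonneg hθ1 (hD0 x0 hx0I)) hx0y0 hx.1 hx0x
      (hDm hx0I hxI hx0x)

theorem piRMt_le_of_argmax_le {D S : ℝ → ℝ} {b θ1 θ2 x0 y0 x s : ℝ}
    (hSc : ConcaveOn ℝ (Icc 0 b) S) (hSa : AntitoneOn S (Icc 0 b))
    (hS0 : ∀ r ∈ Icc 0 b, 0 ≤ S r) (hθ2 : 0 ≤ θ2) (hQ : θ1 * D x0 = θ2 * S y0)
    (hx0 : 0 ≤ x0) (hx0x : x0 ≤ x) (hs : s ∈ Icc x b)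
    (hmax : ∀ r ∈ Icc x b, (r - x) * S r ≤ (s - x) * S s) (hsy0 : s ≤ y0) (hy0b : y0 ≤ b) :
    ∀ y ∈ Icc x0 b, piRMt D S θ1 θ2 x0 y ≤ piRMt D S θ1 θ2 x0 y0 := by
  intro y hy
  have hx0y0 : x0 ≤ y0 := hx0x.trans (hs.1.trans hsy0)
  have hyI : y ∈ Icc 0 b := ⟨hx0.trans hy.1, hy.2⟩
  have hy0I : y0 ∈ Icc 0 b := ⟨hx0.trans hx0y0, hy0b⟩
  rcases le_total y0 y with hy0y | hyy0
  · exact piRMt_le_of_ge hθ2 hQ hx0y0 hy.1 (hSa hy0I hyI hy0y)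
      (sub_mul_le_of_argmax_le hSc hSa hS0 (hx0.trans hx0x) hx0x hs hmax hsy0 hy0y hy.2)
  · exact piRMt_le_of_le hθ2 hQ (mul_nonneg hθ2 (hS0 y0 hy0I)) hx0y0 hy.1 hyI.1 hyy0
      (hSa hyI hy0I hyy0)

theorem isExPostEquilibrium_of_targeting {rhat rb T θl1 θu1 θl2 θu2 : ℝ}
    {D S mA sA σ1 σ2 : ℝ → ℝ} (hrhat : 0 < rhat) (hrb : rhat < rb)
    (hDm : StrictMonoOn D (Icc 0 rb)) (hDc : ConcaveOn ℝ (Icc 0 rb) D) (hD0 : D 0 = 0)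
    (hSa : StrictAntiOn S (Icc 0 rb)) (hSc : ConcaveOn ℝ (Icc 0 rb) S) (hSb : S rb = 0)
    (hθ1 : 0 < θl1) (hθ1' : θl1 ≤ θu1) (hθ2 : 0 < θl2) (hθ2' : θl2 ≤ θu2)
    (hmA : ∀ y ∈ Ioc 0 rb, mA y ∈ Icc 0 y ∧
      ∀ r ∈ Icc 0 y, (y - r) * D r ≤ (y - mA y) * D (mA y))
    (hsA : ∀ x ∈ Ico 0 rb, sA x ∈ Icc x rb ∧
      ∀ r ∈ Icc x rb, (r - x) * S r ≤ (sA x - x) * S (sA x))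
    (hσ1 : ∀ θ1 ∈ Icc θl1 θu1, σ1 θ1 ∈ Icc 0 rhat ∧ θ1 * D (σ1 θ1) = T)
    (hσ2 : ∀ θ2 ∈ Icc θl2 θu2, σ2 θ2 ∈ Icc rhat rb ∧ θ2 * S (σ2 θ2) = T)
    (hmin1 : σ1 θl1 ≤ mA (σ2 θl2)) (hmin2 : sA (σ1 θl1) ≤ σ2 θl2) :
    IsExPostEquilibrium D S rb θl1 θu1 θl2 θu2 σ1 σ2 := by
  have hD_nonneg : ∀ r ∈ Icc 0 rb, 0 ≤ D r := fun r hr =>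
    hD0 ▸ hDm.monotoneOn ⟨le_rfl, hr.1.trans hr.2⟩ hr hr.1
  have hS_nonneg : ∀ r ∈ Icc 0 rb, 0 ≤ S r := fun r hr =>
    hSb ▸ hSa.antitoneOn hr ⟨hr.1.trans hr.2, le_rfl⟩ hr.2
  intro θ1 hθ1m θ2 hθ2m
  obtain ⟨⟨hx0, hx0r⟩, hx0T⟩ := hσ1 θ1 hθ1m
  obtain ⟨⟨hy0r, hy0b⟩, hy0T⟩ := hσ2 θ2 hθ2m
  obtain ⟨⟨hxl, hxlr⟩, hxlT⟩ := hσ1 θl1 ⟨le_rfl, hθ1'⟩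
  obtain ⟨⟨hylr, hylb⟩, hylT⟩ := hσ2 θl2 ⟨le_rfl, hθ2'⟩
  have hx0I : σ1 θ1 ∈ Icc 0 rb := ⟨hx0, hx0r.trans hrb.le⟩
  have hy0I : σ2 θ2 ∈ Icc 0 rb := ⟨hrhat.le.trans hy0r, hy0b⟩
  have hx0xl : σ1 θ1 ≤ σ1 θl1 := hDm.le_of_mul_eq_mul hx0I ⟨hxl, hxlr.trans hrb.le⟩ hθ1 hθ1m.1
    (hD_nonneg _ hx0I) (hx0T.trans hxlT.symm)
  have hyly0 : σ2 θl2 ≤ σ2 θ2 := hSa.le_of_mul_eq_mul hy0I ⟨hrhat.le.trans hylr, hylb⟩ hθ2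
    hθ2m.1 (hS_nonneg _ hy0I) (hy0T.trans hylT.symm)
  obtain ⟨hm, hmax⟩ := hmA (σ2 θl2) ⟨hrhat.trans_le hylr, hylb⟩
  obtain ⟨hs, hsmax⟩ := hsA (σ1 θl1) ⟨hxl, hxlr.trans_lt hrb⟩
  have hQ : θ1 * D (σ1 θ1) = θ2 * S (σ2 θ2) := hx0T.trans hy0T.symm
  exact ⟨piMMt_le_of_le_argmax hDc hDm.monotoneOn hD_nonneg (hθ1.trans_le hθ1m.1).le hQ hyly0
      hy0b hm hmax hx0 (hx0xl.trans hmin1),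
    piRMt_le_of_argmax_le hSc hSa.antitoneOn hS_nonneg (hθ2.trans_le hθ2m.1).le hQ hx0 hx0xl hs
      hsmax (hmin2.trans hyly0) hy0b⟩

theorem asymmetric_equilibrium_multiplicity_general
    (rhat rb : ℝ) (D S mA sA : ℝ → ℝ)
    (hrhat : 0 < rhat) (hrb : rhat < rb)
    (hDm : StrictMonoOn D (Icc 0 rb))
    (hD0 : D 0 = 0)
    (hSa : StrictAntiOn S (Icc 0 rb))
    (hSb : S rb = 0)
    (U : Set ℝ) (hUo : IsOpen U) (hU : Icc (0:ℝ) rb ⊆ U)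
    (hD2 : ContDiffOn ℝ 2 D U) (hS2 : ContDiffOn ℝ 2 S U)
    (hD'' : ∀ x ∈ Icc (0:ℝ) rb, deriv (deriv D) x < 0)
    (hS'' : ∀ x ∈ Icc (0:ℝ) rb, deriv (deriv S) x < 0)
    (θl1 θu1 θl2 θu2 : ℝ)
    (hθ1 : 0 < θl1) (hθ1' : θl1 ≤ θu1) (hθ2 : 0 < θl2) (hθ2' : θl2 ≤ θu2)
    (hmA : ∀ y ∈ Ioc (0:ℝ) rb, mA y ∈ Icc (0:ℝ) y ∧
      (∀ r ∈ Icc (0:ℝ) y, (y - r) * D r ≤ (y - mA y) * D (mA y)) ∧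
      (∀ m ∈ Icc (0:ℝ) y,
        (∀ r ∈ Icc (0:ℝ) y, (y - r) * D r ≤ (y - m) * D m) → m = mA y))
    (hsA : ∀ x ∈ Ico (0:ℝ) rb, sA x ∈ Icc x rb ∧
      (∀ r ∈ Icc x rb, (r - x) * S r ≤ (sA x - x) * S (sA x)) ∧
      (∀ m ∈ Icc x rb,
        (∀ r ∈ Icc x rb, (r - x) * S r ≤ (m - x) * S m) → m = sA x))
    (T1 T2 : ℝ) (hT12 : T1 ≠ T2)
    (σ11 σ21 σ12 σ22 : ℝ → ℝ)
    (hσ11 : ∀ θ1 ∈ Icc θl1 θu1, σ11 θ1 ∈ Icc (0:ℝ) rhat ∧ θ1 * D (σ11 θ1) = T1)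
    (hσ21 : ∀ θ2 ∈ Icc θl2 θu2, σ21 θ2 ∈ Icc rhat rb ∧ θ2 * S (σ21 θ2) = T1)
    (hσ12 : ∀ θ1 ∈ Icc θl1 θu1, σ12 θ1 ∈ Icc (0:ℝ) rhat ∧ θ1 * D (σ12 θ1) = T2)
    (hσ22 : ∀ θ2 ∈ Icc θl2 θu2, σ22 θ2 ∈ Icc rhat rb ∧ θ2 * S (σ22 θ2) = T2)
    (hmin11 : σ11 θl1 ≤ mA (σ21 θl2)) (hmin21 : sA (σ11 θl1) ≤ σ21 θl2)
    (hmin12 : σ12 θl1 ≤ mA (σ22 θl2)) (hmin22 : sA (σ12 θl1) ≤ σ22 θl2) :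
    IsExPostEquilibrium D S rb θl1 θu1 θl2 θu2 σ11 σ21 ∧
    IsExPostEquilibrium D S rb θl1 θu1 θl2 θu2 σ12 σ22 ∧
    (∀ θ1 ∈ Icc θl1 θu1, σ11 θ1 ≠ σ12 θ1) ∧
    (∀ θ2 ∈ Icc θl2 θu2, σ21 θ2 ≠ σ22 θ2) := by
  have hDc : ConcaveOn ℝ (Icc 0 rb) D := concaveOn_of_contDiffOn_two hUo (convex_Icc 0 rb) hU hD2
    fun x hx => (hD'' x (interior_subset hx)).le
  have hSc : ConcaveOn ℝ (Icc 0 rb) S := concaveOn_of_contDiffOn_two hUo (convex_Icc 0 rb) hU hS2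
    fun x hx => (hS'' x (interior_subset hx)).le
  have hmA' := fun y hy => And.intro (hmA y hy).1 (hmA y hy).2.1
  have hsA' := fun x hx => And.intro (hsA x hx).1 (hsA x hx).2.1
  refine ⟨isExPostEquilibrium_of_targeting hrhat hrb hDm hDc hD0 hSa hSc hSb hθ1 hθ1' hθ2 hθ2'
      hmA' hsA' hσ11 hσ21 hmin11 hmin21,
    isExPostEquilibrium_of_targeting hrhat hrb hDm hDc hD0 hSa hSc hSb hθ1 hθ1' hθ2 hθ2'
      hmA' hsA' hσ12 hσ22 hmin12 hmin22,
    fun θ1 hθ h => hT12 ?_, fun θ2 hθ h => hT12 ?_⟩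
  · rw [← (hσ11 θ1 hθ).2, ← (hσ12 θ1 hθ).2, h]
  · rw [← (hσ21 θ2 hθ).2, ← (hσ22 θ2 hθ).2, h]

/-- Multiplicity of asymmetric-information equilibrium strategies: two distinct target
volumes `T₁ ≠ T₂` satisfying the minimal-type constrained-equilibrium condition yield
two distinct ex-post equilibria. -/
theorem asymmetric_equilibrium_multiplicity
    (rhat rb Tmax : ℝ) (D S mA sA : ℝ → ℝ)
    (hrhat : 0 < rhat) (hrb : rhat < rb) (hTmax : 0 < Tmax)
    (hDc : ContinuousOn D (Icc 0 rb)) (hDm : StrictMonoOn D (Icc 0 rb))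
    (hD0 : D 0 = 0) (hDr : D rhat = Tmax)
    (hSc : ContinuousOn S (Icc 0 rb)) (hSa : StrictAntiOn S (Icc 0 rb))
    (hSb : S rb = 0) (hSr : S rhat = Tmax)
    (U : Set ℝ) (hUo : IsOpen U) (hU : Icc (0:ℝ) rb ⊆ U)
    (hD2 : ContDiffOn ℝ 2 D U) (hS2 : ContDiffOn ℝ 2 S U)
    (hD' : ∀ x ∈ Icc (0:ℝ) rb, 0 < deriv D x)
    (hD'' : ∀ x ∈ Icc (0:ℝ) rb, deriv (deriv D) x < 0)
    (hS' : ∀ x ∈ Icc (0:ℝ) rb, deriv S x < 0)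
    (hS'' : ∀ x ∈ Icc (0:ℝ) rb, deriv (deriv S) x < 0)
    (θl1 θu1 θl2 θu2 : ℝ)
    (hθ1 : 0 < θl1) (hθ1' : θl1 ≤ θu1) (hθ2 : 0 < θl2) (hθ2' : θl2 ≤ θu2)
    (hmA : ∀ y ∈ Ioc (0:ℝ) rb, mA y ∈ Icc (0:ℝ) y ∧
      (∀ r ∈ Icc (0:ℝ) y, (y - r) * D r ≤ (y - mA y) * D (mA y)) ∧
      (∀ m ∈ Icc (0:ℝ) y,
        (∀ r ∈ Icc (0:ℝ) y, (y - r) * D r ≤ (y - m) * D m) → m = mA y))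
    (hsA : ∀ x ∈ Ico (0:ℝ) rb, sA x ∈ Icc x rb ∧
      (∀ r ∈ Icc x rb, (r - x) * S r ≤ (sA x - x) * S (sA x)) ∧
      (∀ m ∈ Icc x rb,
        (∀ r ∈ Icc x rb, (r - x) * S r ≤ (m - x) * S m) → m = sA x))
    (T1 T2 : ℝ) (hT12 : T1 ≠ T2)
    (hT1 : T1 ∈ Ioc (0:ℝ) (min (θl1 * Tmax) (θl2 * Tmax)))
    (hT2 : T2 ∈ Ioc (0:ℝ) (min (θl1 * Tmax) (θl2 * Tmax)))
    (σ11 σ21 σ12 σ22 : ℝ → ℝ)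
    (hσ11 : ∀ θ1 ∈ Icc θl1 θu1, σ11 θ1 ∈ Icc (0:ℝ) rhat ∧ θ1 * D (σ11 θ1) = T1)
    (hσ21 : ∀ θ2 ∈ Icc θl2 θu2, σ21 θ2 ∈ Icc rhat rb ∧ θ2 * S (σ21 θ2) = T1)
    (hσ12 : ∀ θ1 ∈ Icc θl1 θu1, σ12 θ1 ∈ Icc (0:ℝ) rhat ∧ θ1 * D (σ12 θ1) = T2)
    (hσ22 : ∀ θ2 ∈ Icc θl2 θu2, σ22 θ2 ∈ Icc rhat rb ∧ θ2 * S (σ22 θ2) = T2)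
    (hmin11 : σ11 θl1 ≤ mA (σ21 θl2)) (hmin21 : sA (σ11 θl1) ≤ σ21 θl2)
    (hmin12 : σ12 θl1 ≤ mA (σ22 θl2)) (hmin22 : sA (σ12 θl1) ≤ σ22 θl2) :
    IsExPostEquilibrium D S rb θl1 θu1 θl2 θu2 σ11 σ21 ∧
    IsExPostEquilibrium D S rb θl1 θu1 θl2 θu2 σ12 σ22 ∧
    (∀ θ1 ∈ Icc θl1 θu1, σ11 θ1 ≠ σ12 θ1) ∧
    (∀ θ2 ∈ Icc θl2 θu2, σ21 θ2 ≠ σ22 θ2) :=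
  asymmetric_equilibrium_multiplicity_general rhat rb D S mA sA hrhat hrb hDm hD0 hSa hSb U hUo hU
    hD2 hS2 hD'' hS'' θl1 θu1 θl2 θu2 hθ1 hθ1' hθ2 hθ2' hmA hsA T1 T2 hT12 σ11 σ21 σ12 σ22 hσ11 hσ21
    hσ12 hσ22 hmin11 hmin21 hmin12 hmin22
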